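/- arXiv:2102.12275 — 3 statements merged into one kernel-verified Lean document; each statement's English description precedes it below -/
import Mathlib

section
/- Let Q(x₁,x₂) be a real polynomial, irreducible over ℂ, and let K ⊂ ℝ² be a compact convex body with C^∞ boundary Γ = ∂K satisfying Γ ⊆ Q⁻¹(0) and ∇Q ≠ 0 on Γ. Let m ≥ 1 and suppose P is a polynomial of one variable such that A_K((0,1),t)^m = P(t) for all real t with ρ₋((0,1)) < t < ρ₊((0,1)). Suppose the line {x₂ = t₀} intersects Γ transversally at exactly two points a = (a₁,t₀), b = (b₁,t₀) with a₁ > b₁, and suppose U ⊆ ℂ is an open connected set containing t₀ and f^a, f^b : U → ℂ are holomorphic functions satisfying Q(f^a(t),t) = Q(f^b(t),t) = 0 on U, f^a(t₀) = a₁, f^b(t₀) = b₁, and for t ∈ U ∩ ℝ the values f^a(t), f^b(t) are real with (f^a(t),t), (f^b(t),t) ∈ Γ. Then, extending P to complex arguments, P(t) = (f^a(t) − f^b(t))^m for all t ∈ U. -/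
/-!
For real `s` near `t₀`, the points `(f^a(s), s)` and `(f^b(s), s)` are two boundary points of the
convex body `K` on a horizontal line meeting its interior, hence the endpoints of the chord, so
`A_K((0,1), s) = f^a(s) − f^b(s)`. Thus `P − (f^a − f^b)^m` is holomorphic on `U` and vanishes on
a real interval around `t₀`; by the identity theorem it vanishes on the connected set `U`.
-/

open MeasureTheory

/-- `ξ` rotated by `π/2`. -/
noncomputable def perp (ξ : EuclideanSpace ℝ (Fin 2)) : EuclideanSpace ℝ (Fin 2) :=
  (WithLp.equiv 2 (Fin 2 → ℝ)).symm ![-ξ 1, ξ 0]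

/-- The chord length function `A_K(ξ,t)`. -/
noncomputable def chordLen (K : Set (EuclideanSpace ℝ (Fin 2)))
    (ξ : EuclideanSpace ℝ (Fin 2)) (t : ℝ) : ℝ :=
  (volume {s : ℝ | t • ξ + s • perp ξ ∈ K}).toReal

/-- `ρ₊(ξ) = max_{x ∈ K} ⟨ξ, x⟩`. -/
noncomputable def rhoPlus (K : Set (EuclideanSpace ℝ (Fin 2)))
    (ξ : EuclideanSpace ℝ (Fin 2)) : ℝ :=
  sSup ((fun x => (inner ℝ ξ x : ℝ)) '' K)

/-- `ρ₋(ξ) = min_{x ∈ K} ⟨ξ, x⟩`. -/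
noncomputable def rhoMinus (K : Set (EuclideanSpace ℝ (Fin 2)))
    (ξ : EuclideanSpace ℝ (Fin 2)) : ℝ :=
  sInf ((fun x => (inner ℝ ξ x : ℝ)) '' K)

/-- The point `(a, b) ∈ ℝ²`. -/
noncomputable def mk2 (a b : ℝ) : EuclideanSpace ℝ (Fin 2) :=
  (WithLp.equiv 2 (Fin 2 → ℝ)).symm ![a, b]

/-- Evaluation of the complexification of a real polynomial `Q(x₁,x₂)` at `(z₁,z₂) ∈ ℂ²`. -/
noncomputable def evalC (Q : MvPolynomial (Fin 2) ℝ) (z1 z2 : ℂ) : ℂ :=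
  MvPolynomial.eval ![z1, z2] (MvPolynomial.map (algebraMap ℝ ℂ) Q)

open Set Filter Topology

lemma AnalyticOnNhd.eqOn_of_preconnected_of_eventually_eq_ofReal {f g : ℂ → ℂ} {U : Set ℂ}
    (hf : AnalyticOnNhd ℂ f U) (hg : AnalyticOnNhd ℂ g U) (hU : IsPreconnected U) {t₀ : ℝ}
    (ht₀ : (t₀ : ℂ) ∈ U) (hfg : ∀ᶠ s : ℝ in 𝓝 t₀, f s = g s) : Set.EqOn f g U := by
  have hmap : Filter.Tendsto ((↑) : ℝ → ℂ) (𝓝[≠] t₀) (𝓝[≠] (t₀ : ℂ)) :=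
    tendsto_nhdsWithin_of_tendsto_nhds_of_eventually_within _
      (Complex.continuous_ofReal.continuousAt.tendsto.mono_left nhdsWithin_le_nhds)
      (eventually_nhdsWithin_of_forall fun _ hs => Complex.ofReal_injective.ne hs)
  exact hf.eqOn_of_preconnected_of_frequently_eq hg hU ht₀
    (hmap.frequently (hfg.filter_mono nhdsWithin_le_nhds).frequently)

namespace ChordLength

variable {K : Set (EuclideanSpace ℝ (Fin 2))}

@[simp] lemma mk2_apply_zero (a b : ℝ) : mk2 a b 0 = a := rfl

@[simp] lemma mk2_apply_one (a b : ℝ) : mk2 a b 1 = b := rfl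

lemma mk2_add_mk2 (a b c d : ℝ) : mk2 a b + mk2 c d = mk2 (a + c) (b + d) := by
  ext i; fin_cases i <;> rfl

lemma smul_mk2 (r a b : ℝ) : r • mk2 a b = mk2 (r * a) (r * b) := by
  ext i; fin_cases i <;> rfl

lemma inner_mk2_zero_one (x : EuclideanSpace ℝ (Fin 2)) : inner ℝ (mk2 0 1) x = x 1 := by
  simp [mk2, PiLp.inner_apply, Fin.sum_univ_two]

lemma map_eq_coord_mul_add (f : EuclideanSpace ℝ (Fin 2) →L[ℝ] ℝ) (x : EuclideanSpace ℝ (Fin 2)) :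
    f x = x 0 * f (mk2 1 0) + x 1 * f (mk2 0 1) := by
  have hx : x = x 0 • mk2 1 0 + x 1 • mk2 0 1 := by
    rw [smul_mk2, smul_mk2, mk2_add_mk2]; ext i; fin_cases i <;> simp
  conv_lhs => rw [hx]
  simp only [map_add, map_smul, smul_eq_mul]

def slice (K : Set (EuclideanSpace ℝ (Fin 2))) (t : ℝ) : Set ℝ := {u | mk2 u t ∈ K}

lemma convex_slice (hK : Convex ℝ K) (t : ℝ) : Convex ℝ (slice K t) := by
  intro u hu v hv a b ha hb hab
  have h := hK hu hv ha hb hab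
  rwa [smul_mk2, smul_mk2, mk2_add_mk2, ← add_mul, hab, one_mul] at h

lemma chordLen_mk2_zero_one (K : Set (EuclideanSpace ℝ (Fin 2))) (t : ℝ) :
    chordLen K (mk2 0 1) t = (volume (slice K t)).toReal := by
  have hline : ∀ s : ℝ, t • mk2 0 1 + s • perp (mk2 0 1) = mk2 (-s) t := by
    intro s; ext i; fin_cases i <;> simp [mk2, perp]
  have hset : {s : ℝ | t • mk2 0 1 + s • perp (mk2 0 1) ∈ K} = -slice K t := by
    ext s; simp [hline, slice]
  rw [chordLen, hset, Measure.measure_neg]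

lemma inner_mem_Ioo_of_mem_interior (hK : Bornology.IsBounded K)
    {ξ : EuclideanSpace ℝ (Fin 2)} (hξ : ξ ≠ 0) {x : EuclideanSpace ℝ (Fin 2)}
    (hx : x ∈ interior K) : inner ℝ ξ x ∈ Ioo (rhoMinus K ξ) (rhoPlus K ξ) := by
  set ℓ := innerSL ℝ ξ
  have hℓ : ℓ ≠ 0 := fun h => hξ (inner_self_eq_zero.mp (DFunLike.congr_fun h ξ))
  have hbdd : Bornology.IsBounded (ℓ '' K) := ℓ.lipschitz.isBounded_image hK
  have hsub : ℓ '' interior K ⊆ Icc (rhoMinus K ξ) (rhoPlus K ξ) := by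
    rintro _ ⟨y, hy, rfl⟩
    exact ⟨csInf_le hbdd.bddBelow ⟨y, interior_subset hy, rfl⟩,
      le_csSup hbdd.bddAbove ⟨y, interior_subset hy, rfl⟩⟩
  rw [← interior_Icc]
  exact interior_maximal hsub (ℓ.isOpenMap_of_ne_zero hℓ _ isOpen_interior) ⟨x, hx, rfl⟩

-- A functional attaining its maximum over `K` at `(c, t)` is constant along the chord through
-- `(c, t)`, and then cannot increase in either vertical direction; so it vanishes, and no
-- supporting hyperplane at `(c, t)` exists.
lemma mk2_mem_interior_of_lt (hKconv : Convex ℝ K) (hKint : (interior K).Nonempty)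
    {u v c t : ℝ} (hu : mk2 u t ∈ K) (hv : mk2 v t ∈ K) (huc : u < c) (hcv : c < v)
    {w z : EuclideanSpace ℝ (Fin 2)} (hw : w ∈ K) (hz : z ∈ K) (hwt : w 1 < t) (htz : t < z 1) :
    mk2 c t ∈ interior K := by
  by_contra hc
  obtain ⟨f, hf0, hf⟩ := geometric_hahn_banach_of_nonempty_interior_point hKconv hc hKint
  have hle : ∀ y ∈ K, (y 0 - c) * f (mk2 1 0) + (y 1 - t) * f (mk2 0 1) ≤ 0 := by
    intro y hy
    have := hf y hy
    rw [map_eq_coord_mul_add f y, map_eq_coord_mul_add f (mk2 c t)] at this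
    simp only [mk2_apply_zero, mk2_apply_one] at this
    linarith
  have hu' := hle _ hu
  have hv' := hle _ hv
  simp only [mk2_apply_zero, mk2_apply_one, sub_self, zero_mul, add_zero] at hu' hv'
  have hα : f (mk2 1 0) = 0 := by nlinarith
  have hw' := hle _ hw
  have hz' := hle _ hz
  rw [hα, mul_zero, zero_add] at hw' hz'
  have hβ : f (mk2 0 1) = 0 := by nlinarith
  exact hf0 (ContinuousLinearMap.ext fun y => by simp [map_eq_coord_mul_add f y, hα, hβ])

lemma slice_eq_Icc_of_mem_frontier (hKc : IsClosed K) (hKconv : Convex ℝ K)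
    (hKint : (interior K).Nonempty) {s a b : ℝ}
    (hlo : rhoMinus K (mk2 0 1) < s) (hhi : s < rhoPlus K (mk2 0 1))
    (hb : mk2 b s ∈ frontier K) (ha : mk2 a s ∈ frontier K) (hba : b < a) :
    slice K s = Icc b a := by
  have hKne : (inner ℝ (mk2 0 1) '' K).Nonempty := (hKint.mono interior_subset).image _
  obtain ⟨_, ⟨w, hw, rfl⟩, hwt⟩ := exists_lt_of_csInf_lt hKne hlo
  obtain ⟨_, ⟨z, hz, rfl⟩, htz⟩ := exists_lt_of_lt_csSup hKne hhi
  rw [inner_mk2_zero_one] at hwt htz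
  have hbK : b ∈ slice K s := hKc.frontier_subset hb
  have haK : a ∈ slice K s := hKc.frontier_subset ha
  refine subset_antisymm (fun u hu => ⟨?_, ?_⟩) ((convex_slice hKconv s).ordConnected.out hbK haK)
  · by_contra! hub
    exact hb.2 (mk2_mem_interior_of_lt hKconv hKint hu haK hub hba hw hz hwt htz)
  · by_contra! hau
    exact ha.2 (mk2_mem_interior_of_lt hKconv hKint hbK hu hba hau hw hz hwt htz)

lemma chordLen_eq_sub_of_mem_frontier (hKc : IsClosed K) (hKconv : Convex ℝ K)
    (hKint : (interior K).Nonempty) {s a b : ℝ}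
    (hlo : rhoMinus K (mk2 0 1) < s) (hhi : s < rhoPlus K (mk2 0 1))
    (hb : mk2 b s ∈ frontier K) (ha : mk2 a s ∈ frontier K) (hba : b < a) :
    chordLen K (mk2 0 1) s = a - b := by
  rw [chordLen_mk2_zero_one, slice_eq_Icc_of_mem_frontier hKc hKconv hKint hlo hhi hb ha hba,
    Real.volume_Icc, ENNReal.toReal_ofReal (sub_nonneg.mpr hba.le)]

end ChordLength

open ChordLength

theorem ext_chord_power_eq_branch_difference_pow_general
    (K : Set (EuclideanSpace ℝ (Fin 2)))
    (hKcomp : IsCompact K) (hKconv : Convex ℝ K) (hKint : (interior K).Nonempty)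
    (m : ℕ)
    (P : Polynomial ℝ)
    (hP : ∀ t : ℝ, rhoMinus K (mk2 0 1) < t → t < rhoPlus K (mk2 0 1) →
      (chordLen K (mk2 0 1) t) ^ m = P.eval t)
    (t₀ a₁ b₁ : ℝ) (hab : b₁ < a₁)
    (ha : mk2 a₁ t₀ ∈ frontier K) (hb : mk2 b₁ t₀ ∈ frontier K)
    (honly : ∀ x ∈ frontier K, x 1 = t₀ → x 0 = a₁ ∨ x 0 = b₁)
    (U : Set ℂ) (hU : IsOpen U) (hUconn : IsConnected U) (ht₀U : (t₀ : ℂ) ∈ U)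
    (fa fb : ℂ → ℂ)
    (hfa : DifferentiableOn ℂ fa U) (hfb : DifferentiableOn ℂ fb U)
    (hreal : ∀ s : ℝ, (s : ℂ) ∈ U → (fa s).im = 0 ∧ (fb s).im = 0 ∧
      mk2 (fa s).re s ∈ frontier K ∧ mk2 (fb s).re s ∈ frontier K)
    (hfa0 : fa t₀ = (a₁ : ℂ)) (hfb0 : fb t₀ = (b₁ : ℂ)) :
    ∀ t ∈ U, (P.map (algebraMap ℝ ℂ)).eval t = (fa t - fb t) ^ m := by
  have hmid : mk2 ((a₁ + b₁) / 2) t₀ ∈ interior K := by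
    refine self_sdiff_frontier K ▸ ⟨(convex_slice hKconv t₀).ordConnected.out
      (hKcomp.isClosed.frontier_subset hb) (hKcomp.isClosed.frontier_subset ha)
      ⟨by linarith, by linarith⟩, fun hfr => ?_⟩
    rcases honly _ hfr rfl with h | h <;> simp only [mk2_apply_zero] at h <;> linarith
  obtain ⟨hlo, hhi⟩ := inner_mem_Ioo_of_mem_interior (ξ := mk2 0 1) hKcomp.isBounded
    (fun h => one_ne_zero congr($h 1)) hmid
  rw [inner_mk2_zero_one, mk2_apply_one] at hlo hhi
  have hre : ∀ f : ℂ → ℂ, DifferentiableOn ℂ f U → ContinuousAt (fun s : ℝ => (f s).re) t₀ :=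
    fun f hf => Complex.continuous_re.continuousAt.comp <|
      (hf.differentiableAt (hU.mem_nhds ht₀U)).continuousAt.comp
        Complex.continuous_ofReal.continuousAt
  have hlt : ∀ᶠ s : ℝ in 𝓝 t₀, (fb s).re < (fa s).re :=
    (hre fb hfb).eventually_lt (hre fa hfa) (by simpa [hfa0, hfb0] using hab)
  have hreal_eq :
      ∀ᶠ s : ℝ in 𝓝 t₀, (P.map (algebraMap ℝ ℂ)).eval (s : ℂ) = (fa s - fb s) ^ m := by
    filter_upwards [hlt, Complex.continuous_ofReal.continuousAt.preimage_mem_nhds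
      (hU.mem_nhds ht₀U), Ioo_mem_nhds hlo hhi] with s hs hsU hsρ
    obtain ⟨hima, himb, hfra, hfrb⟩ := hreal s hsU
    rw [Polynomial.eval_map_algebraMap, ← Complex.coe_algebraMap,
      Polynomial.aeval_algebraMap_apply_eq_algebraMap_eval, Complex.coe_algebraMap,
      ← hP s hsρ.1 hsρ.2,
      chordLen_eq_sub_of_mem_frontier hKcomp.isClosed hKconv hKint hsρ.1 hsρ.2 hfrb hfra hs,
      Complex.ofReal_pow]
    congr 1
    apply Complex.ext <;> simp [hima, himb]
  exact (P.map _).differentiable.differentiableOn.analyticOnNhd hU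
    |>.eqOn_of_preconnected_of_eventually_eq_ofReal (((hfa.sub hfb).pow m).analyticOnNhd hU)
      hUconn.isPreconnected ht₀U hreal_eq

/-- **Analytic continuation of the chord length function (Lemma 4.2).**
Under the hypotheses of the main theorem for `ξ₀ = (0,1)`, if `A_K((0,1),t)^m = P(t)` on
`(ρ₋, ρ₊)` and `f^a, f^b` are holomorphic branches of the endpoints of the horizontal chords
on an open connected set `U ∋ t₀`, as produced by Lemma 4.1, then the complexification of
`P` satisfies `P(t) = (f^a(t) − f^b(t))^m` on all of `U`. -/
theorem ext_chord_power_eq_branch_difference_pow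
    (Q : MvPolynomial (Fin 2) ℝ)
    (hQirr : Irreducible (MvPolynomial.map (algebraMap ℝ ℂ) Q))
    (K : Set (EuclideanSpace ℝ (Fin 2)))
    (hKcomp : IsCompact K) (hKconv : Convex ℝ K) (hKint : (interior K).Nonempty)
    (hQbd : ∀ x ∈ frontier K, MvPolynomial.eval (fun i => x i) Q = 0)
    (hQgrad : ∀ x ∈ frontier K,
      ∃ i : Fin 2, MvPolynomial.eval (fun j => x j) (MvPolynomial.pderiv i Q) ≠ 0)
    (m : ℕ) (hm : 1 ≤ m)
    (P : Polynomial ℝ)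
    (hP : ∀ t : ℝ, rhoMinus K (mk2 0 1) < t → t < rhoPlus K (mk2 0 1) →
      (chordLen K (mk2 0 1) t) ^ m = P.eval t)
    (t₀ a₁ b₁ : ℝ) (hab : b₁ < a₁)
    (ha : mk2 a₁ t₀ ∈ frontier K) (hb : mk2 b₁ t₀ ∈ frontier K)
    (honly : ∀ x ∈ frontier K, x 1 = t₀ → x 0 = a₁ ∨ x 0 = b₁)
    (htransa : MvPolynomial.eval ![a₁, t₀] (MvPolynomial.pderiv 0 Q) ≠ 0)
    (htransb : MvPolynomial.eval ![b₁, t₀] (MvPolynomial.pderiv 0 Q) ≠ 0)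
    (U : Set ℂ) (hU : IsOpen U) (hUconn : IsConnected U) (ht₀U : (t₀ : ℂ) ∈ U)
    (fa fb : ℂ → ℂ)
    (hfa : DifferentiableOn ℂ fa U) (hfb : DifferentiableOn ℂ fb U)
    (hroots : ∀ t ∈ U, evalC Q (fa t) t = 0 ∧ evalC Q (fb t) t = 0)
    (hreal : ∀ s : ℝ, (s : ℂ) ∈ U → (fa s).im = 0 ∧ (fb s).im = 0 ∧
      mk2 (fa s).re s ∈ frontier K ∧ mk2 (fb s).re s ∈ frontier K)
    (hfa0 : fa t₀ = (a₁ : ℂ)) (hfb0 : fb t₀ = (b₁ : ℂ)) :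
    ∀ t ∈ U, (P.map (algebraMap ℝ ℂ)).eval t = (fa t - fb t) ^ m :=
  ext_chord_power_eq_branch_difference_pow_general K hKcomp hKconv hKint m P hP t₀ a₁ b₁ hab ha hb
    honly U hU hUconn ht₀U fa fb hfa hfb hreal hfa0 hfb0
end

section
/- Let Q(z₁,z₂) be a complex polynomial of total degree N ≥ 1 with top-degree homogeneous part Q_N satisfying Q_N(1,0) ≠ 0. Then for every ε > 0 there exists R > 0 such that for every t ∈ ℂ with |t| ≥ R and every z₁ ∈ ℂ with Q(z₁,t) = 0, there exists w ∈ ℂ with Q_N(w,1) = 0 and |z₁/t − w| < ε; that is, for large |t| each root of Q(·,t), divided by t, lies within ε of some root of the one-variable polynomial w ↦ Q_N(w,1). -/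
/-!
Put `u = z₁ / t` and `q = Q_N(·, 1)`, a polynomial of exact degree `N` since `Q_N(1, 0) ≠ 0`.
By homogeneity `Q(t u, t) = ∑ⱼ tʲ Qⱼ(u, 1)`, so a root gives `tᴺ q(u) = -∑_{j<N} tʲ Qⱼ(u, 1)`.
If `u` is `ε`-far from every root of `q`, the factorisation of `q` gives
`|q(u)| ≥ η max(1, |u|)ᴺ`, while the right-hand side is `O((|t| max(1, |u|))ᴺ⁻¹)`,
so the two estimates are incompatible once `|t|` is large.
-/

open Polynomial Finset

lemma mul_max_one_le_norm_sub {E : Type*} [SeminormedAddCommGroup E] {ε : ℝ} (hε₀ : 0 ≤ ε)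
    {u r : E} (hε : ε ≤ ‖u - r‖) : min ε 1 / (‖r‖ + 1) * max 1 ‖u‖ ≤ ‖u - r‖ := by
  have hr : 0 < ‖r‖ + 1 := by positivity
  rw [div_mul_eq_mul_div, div_le_iff₀ hr]
  rcases le_or_gt ‖u‖ (‖r‖ + 1) with hu | hu
  · calc min ε 1 * max 1 ‖u‖ ≤ ε * (‖r‖ + 1) := by
          gcongr
          · exact min_le_left _ _
          · exact max_le (by linarith [norm_nonneg r]) hu
      _ ≤ ‖u - r‖ * (‖r‖ + 1) := by gcongr
  · have := norm_sub_norm_le u r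
    rw [max_eq_right (by linarith [norm_nonneg r])]
    nlinarith [min_le_right ε 1, norm_nonneg r, norm_nonneg u]

namespace Polynomial

variable {K : Type*} [NormedField K]

lemma norm_eval_le_sum_norm_coeff_mul (p : K[X]) (u : K) :
    ‖p.eval u‖ ≤ (p.sum fun _ a => ‖a‖) * max 1 ‖u‖ ^ p.natDegree := by
  rw [eval_eq_sum, sum_def, sum_def, Finset.sum_mul]
  refine (norm_sum_le _ _).trans (Finset.sum_le_sum fun n hn => ?_)
  rw [norm_mul, norm_pow]
  gcongr
  calc ‖u‖ ^ n ≤ max 1 ‖u‖ ^ n := by gcongr; exact le_max_right _ _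
    _ ≤ max 1 ‖u‖ ^ p.natDegree :=
        pow_le_pow_right₀ (le_max_left _ _) (le_natDegree_of_mem_supp n hn)

lemma exists_pos_mul_max_one_pow_le_norm_eval [IsAlgClosed K] {p : K[X]} (hp : p ≠ 0)
    {ε : ℝ} (hε : 0 < ε) : ∃ η > 0, ∀ u : K, (∀ r ∈ p.roots, ε ≤ ‖u - r‖) →
      η * max 1 ‖u‖ ^ p.natDegree ≤ ‖p.eval u‖ := by
  set k : K → ℝ := fun r => min ε 1 / (‖r‖ + 1)
  have hk : ∀ r, 0 < k r := fun r => by positivity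
  refine ⟨‖p.leadingCoeff‖ * (p.roots.map k).prod, ?_, fun u hu => ?_⟩
  · exact mul_pos (norm_pos_iff.2 (leadingCoeff_ne_zero.2 hp))
      (Multiset.prod_pos fun x hx => by
        obtain ⟨r, -, rfl⟩ := Multiset.mem_map.1 hx; exact hk r)
  have hsplit :=
    C_leadingCoeff_mul_prod_multiset_X_sub_C (IsAlgClosed.card_roots_eq_natDegree (p := p))
  calc ‖p.leadingCoeff‖ * (p.roots.map k).prod * max 1 ‖u‖ ^ p.natDegree
      = ‖p.leadingCoeff‖ * (p.roots.map fun r => k r * max 1 ‖u‖).prod := by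
        rw [Multiset.prod_map_mul, Multiset.map_const', Multiset.prod_replicate,
          IsAlgClosed.card_roots_eq_natDegree, mul_assoc]
    _ ≤ ‖p.leadingCoeff‖ * (p.roots.map fun r => ‖u - r‖).prod := by
        gcongr
        exact Multiset.prod_map_le_prod_map₀ _ _ (fun r _ => by positivity)
          fun r hr => mul_max_one_le_norm_sub hε.le (hu r hr)
    _ = ‖p.eval u‖ := by
        conv_rhs => rw [← hsplit]
        rw [eval_mul, eval_C, eval_multiset_prod, norm_mul, Multiset.map_map]
        congr 1
        refine Eq.trans ?_ (map_multiset_prod (normHom : K →*₀ ℝ) _).symm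
        simp [Multiset.map_map]

lemma norm_eval_mul_pow_mul_le {p : K[X]} {j N : ℕ} (hj : j < N) (hp : p.natDegree < N)
    {t : K} (ht : 1 ≤ ‖t‖) (u : K) :
    ‖p.eval u * t ^ j‖ * (‖t‖ * max 1 ‖u‖) ≤
      (p.sum fun _ a => ‖a‖) * (‖t‖ * max 1 ‖u‖) ^ N := by
  obtain ⟨n, rfl⟩ : ∃ n, N = n + 1 := ⟨N - 1, by omega⟩
  have hM : 1 ≤ max 1 ‖u‖ := le_max_left _ _
  have hS : 0 ≤ p.sum fun _ a => ‖a‖ := sum_nonneg fun _ _ => norm_nonneg _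
  calc ‖p.eval u * t ^ j‖ * (‖t‖ * max 1 ‖u‖)
      = ‖p.eval u‖ * ‖t‖ ^ j * (‖t‖ * max 1 ‖u‖) := by rw [norm_mul, norm_pow]
    _ ≤ (p.sum fun _ a => ‖a‖) * max 1 ‖u‖ ^ n * ‖t‖ ^ n * (‖t‖ * max 1 ‖u‖) := by
        have hpu : ‖p.eval u‖ ≤ (p.sum fun _ a => ‖a‖) * max 1 ‖u‖ ^ n :=
          (norm_eval_le_sum_norm_coeff_mul p u).trans
            (mul_le_mul_of_nonneg_left (pow_le_pow_right₀ hM (by omega)) hS)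
        have htj : ‖t‖ ^ j ≤ ‖t‖ ^ n := pow_le_pow_right₀ ht (by omega)
        gcongr
    _ = (p.sum fun _ a => ‖a‖) * (‖t‖ * max 1 ‖u‖) ^ (n + 1) := by ring

theorem exists_mem_roots_norm_sub_lt_of_eval_mul_pow_add_sum_eq_zero [IsAlgClosed K] {q : K[X]}
    (hq : q ≠ 0) {p : ℕ → K[X]} (hp : ∀ j < q.natDegree, (p j).natDegree < q.natDegree)
    {ε : ℝ} (hε : 0 < ε) :
    ∃ R > 0, ∀ t u : K, R ≤ ‖t‖ →
      q.eval u * t ^ q.natDegree + ∑ j ∈ range q.natDegree, (p j).eval u * t ^ j = 0 →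
        ∃ r ∈ q.roots, ‖u - r‖ < ε := by
  set N := q.natDegree
  obtain ⟨η, hη, hlow⟩ := exists_pos_mul_max_one_pow_le_norm_eval hq hε
  set C := ∑ j ∈ range N, (p j).sum fun _ a => ‖a‖
  have hC : 0 ≤ C := sum_nonneg fun j _ => sum_nonneg fun k _ => norm_nonneg _
  refine ⟨C / η + 1, by positivity, fun t u ht h => ?_⟩
  by_contra! hfar
  have ht1 : 1 ≤ ‖t‖ := le_trans (by linarith [div_nonneg hC hη.le]) ht
  set a := ‖t‖ * max 1 ‖u‖
  have hta : ‖t‖ ≤ a := le_mul_of_one_le_right (by linarith) (le_max_left _ _)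
  have ha : 0 < a := by linarith
  have hlower : η * a ^ N ≤ ‖q.eval u * t ^ N‖ := by
    calc η * a ^ N = η * max 1 ‖u‖ ^ N * ‖t‖ ^ N := by ring
      _ ≤ ‖q.eval u‖ * ‖t‖ ^ N := by gcongr; exact hlow u hfar
      _ = ‖q.eval u * t ^ N‖ := by rw [norm_mul, norm_pow]
  have hupper : ‖q.eval u * t ^ N‖ * a ≤ C * a ^ N := by
    rw [eq_neg_of_add_eq_zero_left h, norm_neg, sum_mul]
    refine (mul_le_mul_of_nonneg_right (norm_sum_le _ _) ha.le).trans ?_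
    rw [sum_mul]
    exact sum_le_sum fun j hj =>
      norm_eval_mul_pow_mul_le (mem_range.1 hj) (hp j (mem_range.1 hj)) ht1 u
  have hηa : η * a ≤ C := le_of_mul_le_mul_right
    (by nlinarith [mul_le_mul_of_nonneg_right hlower ha.le]) (pow_pos ha N)
  have htC : ‖t‖ ≤ C / η := by rw [le_div_iff₀ hη]; nlinarith
  linarith

end Polynomial

namespace MvPolynomial.IsHomogeneous

variable {R : Type*} [CommSemiring R] {P : MvPolynomial (Fin 2) R} {n : ℕ}

lemma natDegree_aeval_X_one_le (hP : P.IsHomogeneous n) :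
    (MvPolynomial.aeval ![(Polynomial.X : R[X]), 1] P).natDegree ≤ n := by
  rw [P.as_sum, map_sum]
  refine natDegree_sum_le_of_forall_le _ _ fun d hd => ?_
  have hd : d 0 + d 1 = n := by
    simpa [Finsupp.weight_apply, Finsupp.sum_fintype, Fin.sum_univ_two] using
      hP (mem_support_iff.1 hd)
  rw [aeval_monomial, Finsupp.prod_fintype _ _ fun _ => pow_zero _, Fin.prod_univ_two]
  simp only [Matrix.cons_val_zero, Matrix.cons_val_one, one_pow, mul_one]
  exact (natDegree_C_mul_X_pow_le _ _).trans (by omega)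

lemma eval_one_zero (hP : P.IsHomogeneous n) :
    MvPolynomial.eval ![1, 0] P =
      (MvPolynomial.aeval ![(Polynomial.X : R[X]), 1] P).coeff n := by
  conv_lhs => rw [← homogenize_eq_of_isHomogeneous hP rfl]
  simp only [homogenize, map_sum, eval_monomial]
  rw [Finset.sum_eq_single_of_mem (n, 0) (by simp)]
  · simp
  · rintro ⟨k, l⟩ hkl hne
    have hl : l ≠ 0 := by rintro rfl; simp_all
    simp [hl]

lemma eval_eq_eval_aeval_X_one_mul_pow {K : Type*} [Field K] {P : MvPolynomial (Fin 2) K}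
    (hP : P.IsHomogeneous n) (x : Fin 2 → K) (hx : x 1 ≠ 0) :
    MvPolynomial.eval x P =
      (MvPolynomial.aeval ![(Polynomial.X : K[X]), 1] P).eval (x 0 / x 1) * x 1 ^ n := by
  conv_lhs => rw [← homogenize_eq_of_isHomogeneous hP rfl]
  exact eval_homogenize hP.natDegree_aeval_X_one_le x hx

end MvPolynomial.IsHomogeneous

open MvPolynomial in
theorem roots_approach_roots_of_leading_part_general
    (Q : MvPolynomial (Fin 2) ℂ) (N : ℕ)
    (hdeg : Q.totalDegree = N)
    (hlead : MvPolynomial.eval ![(1 : ℂ), 0] (MvPolynomial.homogeneousComponent N Q) ≠ 0) :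
    ∀ ε > (0 : ℝ), ∃ R > (0 : ℝ), ∀ t : ℂ, R ≤ ‖t‖ →
      ∀ z₁ : ℂ, MvPolynomial.eval ![z₁, t] Q = 0 →
        ∃ w : ℂ, MvPolynomial.eval ![w, (1 : ℂ)] (MvPolynomial.homogeneousComponent N Q) = 0 ∧
          ‖z₁ / t - w‖ < ε := by
  intro ε hε
  set p : ℕ → ℂ[X] := fun j => aeval ![Polynomial.X, 1] (homogeneousComponent j Q)
  have hhom j := homogeneousComponent_isHomogeneous j Q
  have hcoeff : (p N).coeff N ≠ 0 := by rwa [← (hhom N).eval_one_zero]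
  have hdegN : (p N).natDegree = N :=
    natDegree_eq_of_le_of_coeff_ne_zero (hhom N).natDegree_aeval_X_one_le hcoeff
  have hp0 : p N ≠ 0 := fun h => hcoeff (by rw [h, Polynomial.coeff_zero])
  obtain ⟨R, hR, hroots⟩ := exists_mem_roots_norm_sub_lt_of_eval_mul_pow_add_sum_eq_zero hp0
    (fun j hj => hdegN ▸ ((hhom j).natDegree_aeval_X_one_le.trans_lt (hdegN ▸ hj))) hε
  refine ⟨R, hR, fun t ht z₁ hz => ?_⟩
  have ht0 : t ≠ 0 := norm_pos_iff.1 (hR.trans_le ht)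
  have hdehom : ∀ j, eval ![z₁, t] (homogeneousComponent j Q) = (p j).eval (z₁ / t) * t ^ j :=
    fun j => (hhom j).eval_eq_eval_aeval_X_one_mul_pow _ ht0
  rw [← sum_homogeneousComponent Q, hdeg, map_sum, sum_range_succ] at hz
  simp only [hdehom] at hz
  obtain ⟨r, hr, hlt⟩ := hroots t (z₁ / t) ht (by rwa [hdegN, add_comm])
  refine ⟨r, ?_, hlt⟩
  rw [(hhom N).eval_eq_eval_aeval_X_one_mul_pow _ one_ne_zero]
  simpa using (mem_roots hp0).1 hr

/-- **Asymptotic localization of the roots (Lemma 5.1, refined form).**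
Let `Q(z₁,z₂)` be a complex polynomial of total degree `N ≥ 1` whose top-degree homogeneous
part `Q_N` satisfies `Q_N(1,0) ≠ 0`.  Then for every `ε > 0` there is `R > 0` such that for
every `t` with `|t| ≥ R` and every root `z₁` of `Q(·,t)`, the quotient `z₁/t` lies within
`ε` of some root `w` of the one-variable polynomial `w ↦ Q_N(w,1)`. -/
theorem roots_approach_roots_of_leading_part
    (Q : MvPolynomial (Fin 2) ℂ) (N : ℕ) (hN : 1 ≤ N)
    (hdeg : Q.totalDegree = N)
    (hlead : MvPolynomial.eval ![(1 : ℂ), 0] (MvPolynomial.homogeneousComponent N Q) ≠ 0) :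
    ∀ ε > (0 : ℝ), ∃ R > (0 : ℝ), ∀ t : ℂ, R ≤ ‖t‖ →
      ∀ z₁ : ℂ, MvPolynomial.eval ![z₁, t] Q = 0 →
        ∃ w : ℂ, MvPolynomial.eval ![w, (1 : ℂ)] (MvPolynomial.homogeneousComponent N Q) = 0 ∧
          ‖z₁ / t - w‖ < ε :=
  roots_approach_roots_of_leading_part_general Q N hdeg hlead
end

section
/- Let n ≥ 2, let c₁, …, c_n > 0, and let E = {x ∈ ℝⁿ : Σ_{i=1}^n x_i²/c_i ≤ 1}. For a unit vector ξ set h(ξ) = √(Σ_{i=1}^n c_i·ξ_i²). Then for every unit vector ξ and every t ∈ ℝ with |t| ≤ h(ξ), the (n−1)-dimensional volume of the hyperplane section E ∩ {x : ⟨ξ,x⟩ = t} equals ω_{n−1}·√(c₁⋯c_n)·(h(ξ)² − t²)^{(n−1)/2}/h(ξ)ⁿ, where ω_{n−1} is the volume of the closed unit ball of ℝ^{n−1}. In particular, the m-th power of the sectional volume function of a solid ellipsoid is, for each fixed unit ξ, a polynomial in t on its support, with m = 1 when n is odd and m = 2 when n is even. -/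
/-!
The diagonal map `A = diag(c_i^{-1/2})` sends `E` onto the unit ball and the hyperplane
`⟪ξ, x⟫ = t` onto the hyperplane `⟪ν, y⟫ = t / h` with unit normal `ν = diag(√c_i) ξ / h`.
That hyperplane cuts the unit ball in an `(n-1)`-ball of radius `√(1 - t² / h²)`, and the
restriction of `A` to the two hyperplanes scales `(n-1)`-volume by `|det A| * h`: in orthonormal
bases adapted to the hyperplanes the matrix of `A` is block triangular with corner
`⟪ν, A ξ⟫ = 1 / h`. For odd `n` the exponent `(n-1)/2` is an integer; for even `n` it becomes one
after squaring.
-/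

open MeasureTheory Module Metric
open scoped RealInnerProductSpace

variable {E F : Type*} [NormedAddCommGroup E] [InnerProductSpace ℝ E]
  [NormedAddCommGroup F] [InnerProductSpace ℝ F]

theorem Orthonormal.sumElim_unit {ι : Type*} {b : ι → E} (hb : Orthonormal ℝ b) {ξ : E}
    (hξ : ‖ξ‖ = 1) (h : ∀ i, ⟪ξ, b i⟫ = 0) : Orthonormal ℝ (Sum.elim b fun _ : Unit => ξ) := by
  classical
  rw [orthonormal_iff_ite] at hb ⊢
  rintro (i | _) (j | _)
  · simp [hb]
  · simp [real_inner_comm, h]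
  · simp [h]
  · simp [hξ]

theorem AffineMap.isometry_linear {φ : F →ᵃ[ℝ] E} (hφ : Isometry φ) : Isometry φ.linear := by
  refine AddMonoidHomClass.isometry_of_norm _ fun v => ?_
  simpa [φ.decomp', dist_eq_norm] using hφ.dist_eq v 0

theorem abs_det_eq_abs_det_mul_abs_inner [FiniteDimensional ℝ E] [FiniteDimensional ℝ F]
    (hdim : finrank ℝ F + 1 = finrank ℝ E) {L M : F →ₗᵢ[ℝ] E} {ξ ν : E} (hξ : ‖ξ‖ = 1)
    (hν : ‖ν‖ = 1) (hL : ∀ y, ⟪ξ, L y⟫ = 0) (hM : ∀ y, ⟪ν, M y⟫ = 0) {A : E →ₗ[ℝ] E}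
    {T : F →ₗ[ℝ] F} (hT : ∀ y, M (T y) = A (L y)) :
    |LinearMap.det A| = |LinearMap.det T| * |⟪ν, A ξ⟫| := by
  let b := stdOrthonormalBasis ℝ F
  have hcard : Fintype.card (Fin (finrank ℝ F) ⊕ Unit) = finrank ℝ E := by simp [hdim]
  have hu := (b.orthonormal.comp_linearIsometry L).sumElim_unit hξ fun i => hL _
  have hv := (b.orthonormal.comp_linearIsometry M).sumElim_unit hν fun i => hM _
  -- in these bases the matrix of `A` is block upper triangular, with `T` in the upper corner
  let u := OrthonormalBasis.mk hu (hu.linearIndependent.span_eq_top_of_card_eq_finrank' hcard).ge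
  let v := OrthonormalBasis.mk hv (hv.linearIndependent.span_eq_top_of_card_eq_finrank' hcard).ge
  have hblocks : v.toBasis.toMatrix (A ∘ u) = Matrix.fromBlocks (b.toBasis.toMatrix (T ∘ b))
      (Matrix.of fun i _ => ⟪M (b i), A ξ⟫) 0 (Matrix.of fun _ _ => ⟪ν, A ξ⟫) := by
    ext (i | _) (j | _) <;>
      simp [u, v, Basis.toMatrix_apply, OrthonormalBasis.repr_apply_apply, ← hT, hM]
  have hdetT : b.toBasis.det (T ∘ b) = LinearMap.det T := by
    rw [← mul_one (LinearMap.det T), ← b.toBasis.det_self]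
    exact b.toBasis.det_comp T b.toBasis
  have hdetA : LinearMap.det T * ⟪ν, A ξ⟫ = LinearMap.det A * v.toBasis.det u := by
    rw [← hdetT, ← v.toBasis.det_comp, v.toBasis.det_apply, hblocks, Matrix.det_fromBlocks_zero₂₁,
      ← b.toBasis.det_apply, Matrix.det_unique, Matrix.of_apply]
  rcases v.det_to_matrix_orthonormalBasis_real u with h | h <;> simp [← abs_mul, hdetA, h]

theorem norm_le_one_iff_norm_sub_smul_le_sqrt {ν x : E} (hν : ‖ν‖ = 1) {τ : ℝ} (hx : ⟪ν, x⟫ = τ)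
    (hτ : τ ^ 2 ≤ 1) : ‖x‖ ≤ 1 ↔ ‖x - τ • ν‖ ≤ √(1 - τ ^ 2) := by
  have hpyth : ‖x - τ • ν‖ ^ 2 = ‖x‖ ^ 2 - τ ^ 2 := by
    rw [norm_sub_sq_real, real_inner_smul_right, real_inner_comm, hx, norm_smul, hν,
      Real.norm_eq_abs, mul_one, sq_abs]
    ring
  rw [Real.le_sqrt (norm_nonneg _) (by linarith), hpyth, sub_le_sub_iff_right,
    sq_le_one_iff₀ (norm_nonneg _)]

theorem exists_linearIsometry_factor_of_inner_eq [FiniteDimensional ℝ E] [FiniteDimensional ℝ F]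
    (hdim : finrank ℝ F + 1 = finrank ℝ E) {ν : E} (hν : ‖ν‖ = 1) {g : F →ᵃ[ℝ] E} {τ : ℝ}
    (hg : ∀ y, ⟪ν, g y⟫ = τ) :
    ∃ (M : F →ₗᵢ[ℝ] E) (T : F →ₗ[ℝ] F) (w : F), (∀ y, ⟪ν, M y⟫ = 0) ∧
      (∀ y, M (T y) = g.linear y) ∧ ∀ y, M (T y + w) = g y - τ • ν := by
  set K := (ℝ ∙ ν)ᗮ
  have hν0 : ν ≠ 0 := by rintro rfl; simp at hν
  have hK : finrank ℝ F = finrank ℝ K := by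
    have := (ℝ ∙ ν).finrank_add_finrank_orthogonal
    rw [finrank_span_singleton hν0] at this
    change 1 + finrank ℝ K = _ at this
    omega
  let e : F ≃ₗᵢ[ℝ] K := (stdOrthonormalBasis ℝ F).equiv (stdOrthonormalBasis ℝ K) (finCongr hK)
  have hmem (x : E) : x ∈ K ↔ ⟪ν, x⟫ = 0 := Submodule.mem_orthogonal_singleton_iff_inner_right
  have hlinear_mem (y : F) : g.linear y ∈ K := by simp [hmem, g.decomp', inner_sub_right, hg]
  have hbase_mem : g 0 - τ • ν ∈ K := by
    simp [hmem, inner_sub_right, real_inner_smul_right, hν, hg]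
  refine ⟨K.subtypeₗᵢ.comp e.toLinearIsometry,
    e.symm.toLinearMap ∘ₗ g.linear.codRestrict K hlinear_mem, e.symm ⟨_, hbase_mem⟩,
    fun y => (hmem _).1 (e y).2, fun y => by simp, fun y => by simp [g.decomp']⟩

theorem addHaar_preimage_linearMap_add_closedBall [MeasurableSpace F] [BorelSpace F]
    [FiniteDimensional ℝ F] (μ : Measure F) [μ.IsAddHaarMeasure] {T : F →ₗ[ℝ] F}
    (hT : LinearMap.det T ≠ 0) (w : F) {r : ℝ} (hr : 0 ≤ r) :
    μ ((fun y => T y + w) ⁻¹' closedBall 0 r) =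
      ENNReal.ofReal (|LinearMap.det T|⁻¹ * r ^ finrank ℝ F) * μ (closedBall 0 1) := by
  have hball : (fun y => T y + w) ⁻¹' closedBall 0 r = T ⁻¹' closedBall (-w) r := by
    ext y; simp [dist_eq_norm]
  rw [hball, Measure.addHaar_preimage_linearMap μ hT, Measure.addHaar_closedBall' μ _ hr, abs_inv,
    ← mul_assoc, ← ENNReal.ofReal_mul (by positivity)]

/-- Here `η = (A⁻¹)ᵀ ξ`, so `A` maps the hyperplane `⟪ξ, x⟫ = t` onto `⟪η, y⟫ = t`. -/
theorem addHaar_preimage_ellipsoid_of_isometry [FiniteDimensional ℝ E] [MeasurableSpace F]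
    [BorelSpace F] [FiniteDimensional ℝ F] (μ : Measure F) [μ.IsAddHaarMeasure]
    (hdim : finrank ℝ F + 1 = finrank ℝ E) {A : E →ₗ[ℝ] E} (hA : LinearMap.det A ≠ 0)
    {ξ η : E} (hξ : ‖ξ‖ = 1) (hη : ∀ x, ⟪η, A x⟫ = ⟪ξ, x⟫) {t : ℝ} (ht : |t| ≤ ‖η‖)
    {φ : F →ᵃ[ℝ] E} (hφ : Isometry φ) (hφt : ∀ y, ⟪ξ, φ y⟫ = t) :
    μ (φ ⁻¹' {x | ‖A x‖ ≤ 1}) =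
      ENNReal.ofReal (√(‖η‖ ^ 2 - t ^ 2) ^ finrank ℝ F /
        (|LinearMap.det A| * ‖η‖ ^ (finrank ℝ F + 1))) * μ (closedBall 0 1) := by
  have hη0 : η ≠ 0 := fun h => by simpa [h, hξ] using hη ξ
  have hη_pos : 0 < ‖η‖ := norm_pos_iff.2 hη0
  set ν := ‖η‖⁻¹ • η
  have hν : ‖ν‖ = 1 := norm_smul_inv_norm hη0
  have hνA (x : E) : ⟪ν, A x⟫ = ⟪ξ, x⟫ / ‖η‖ := by
    rw [real_inner_smul_left, hη, inv_mul_eq_div]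
  set τ := t / ‖η‖
  have hτ : τ ^ 2 ≤ 1 := by
    rw [div_pow, div_le_one (by positivity), ← sq_abs t]
    gcongr
  obtain ⟨M, T, w, hM, hT, hw⟩ := exists_linearIsometry_factor_of_inner_eq hdim hν
    (g := A.toAffineMap.comp φ) (τ := τ) fun y => by simp [hνA, hφt, τ]
  have hdet : |LinearMap.det T| = |LinearMap.det A| * ‖η‖ := by
    have hL (y : F) : ⟪ξ, φ.linear y⟫ = 0 := by simp [φ.decomp', inner_sub_right, hφt]
    have := abs_det_eq_abs_det_mul_abs_inner hdim hξ hν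
      (L := φ.linear.toLinearIsometry (φ.isometry_linear hφ)) (A := A) hL hM hT
    rw [this, hνA, real_inner_self_eq_norm_sq, hξ, one_pow, abs_one_div, abs_norm]
    field_simp
  have hset : φ ⁻¹' {x | ‖A x‖ ≤ 1} = (fun y => T y + w) ⁻¹' closedBall 0 √(1 - τ ^ 2) := by
    ext y
    simp only [Set.mem_preimage, Set.mem_ofPred_eq, mem_closedBall, dist_zero_right, ← M.norm_map,
      hw]
    exact norm_le_one_iff_norm_sub_smul_le_sqrt hν (by simp [hνA, hφt, τ]) hτ
  have hT0 : LinearMap.det T ≠ 0 := by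
    rw [← abs_pos, hdet]; exact mul_pos (abs_pos.2 hA) hη_pos
  rw [hset, addHaar_preimage_linearMap_add_closedBall μ hT0 w (Real.sqrt_nonneg _), hdet]
  congr 2
  have hsqrt : √(1 - τ ^ 2) = √(‖η‖ ^ 2 - t ^ 2) / ‖η‖ := by
    have hquot : 1 - τ ^ 2 = (‖η‖ ^ 2 - t ^ 2) / ‖η‖ ^ 2 := by
      simp only [τ]
      field_simp
    rw [hquot, Real.sqrt_div' _ (sq_nonneg _), Real.sqrt_sq hη_pos.le]
  rw [hsqrt, div_pow]
  field_simp
  ring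

theorem Real.rpow_sub_one_div_two_eq_sqrt_pow {a : ℝ} (ha : 0 ≤ a) {n : ℕ} (hn : 1 ≤ n) :
    a ^ (((n : ℝ) - 1) / 2) = √a ^ (n - 1) := by
  rw [Real.sqrt_eq_rpow, ← Real.rpow_mul_natCast ha, Nat.cast_sub hn]
  ring_nf

theorem exists_eval_eq_mul_sqrt_sub_sq_pow_two_mul (κ a : ℝ) (j : ℕ) :
    ∃ p : Polynomial ℝ, ∀ s, s ^ 2 ≤ a → κ * √(a - s ^ 2) ^ (2 * j) = p.eval s :=
  ⟨.C κ * (.C a - .X ^ 2) ^ j, fun s hs => by simp [pow_mul, Real.sq_sqrt (sub_nonneg.2 hs)]⟩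

section Diagonal

open Matrix

variable {ι : Type*} [Fintype ι] [DecidableEq ι]

theorem Matrix.toEuclideanLin_diagonal_apply (d : ι → ℝ) (x : EuclideanSpace ℝ ι) (i : ι) :
    toEuclideanLin (diagonal d) x i = d i * x i := by
  simp [mulVec_diagonal]

theorem Matrix.inner_toEuclideanLin_diagonal_inv {d : ι → ℝ} (hd : ∀ i, d i ≠ 0)
    (x y : EuclideanSpace ℝ ι) :
    ⟪toEuclideanLin (diagonal d) x, toEuclideanLin (diagonal fun i => (d i)⁻¹) y⟫ = ⟪x, y⟫ := by
  simp only [PiLp.inner_apply, toEuclideanLin_diagonal_apply]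
  congr! 1 with i
  have := hd i
  simp [field]

variable {c : ι → ℝ}

theorem setOf_sum_sq_div_le_one_eq (hc : ∀ i, 0 ≤ c i) :
    {x : EuclideanSpace ℝ ι | ∑ i, x i ^ 2 / c i ≤ 1} =
      {x | ‖toEuclideanLin (diagonal fun i => (√(c i))⁻¹) x‖ ≤ 1} := by
  ext x
  simp [← sq_le_one_iff₀ (norm_nonneg _), EuclideanSpace.norm_sq_eq,
    toEuclideanLin_diagonal_apply, mul_pow, Real.sq_sqrt (hc _), div_eq_inv_mul]

theorem norm_toEuclideanLin_diagonal_sqrt (hc : ∀ i, 0 ≤ c i) (ξ : EuclideanSpace ℝ ι) :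
    ‖toEuclideanLin (diagonal fun i => √(c i)) ξ‖ = √(∑ i, c i * ξ i ^ 2) := by
  simp [EuclideanSpace.norm_eq, toEuclideanLin_diagonal_apply, mul_pow, Real.sq_sqrt (hc _)]

theorem abs_det_toEuclideanLin_diagonal_inv_sqrt (hc : ∀ i, 0 ≤ c i) :
    |LinearMap.det (toEuclideanLin (diagonal fun i => (√(c i))⁻¹))| = (√(∏ i, c i))⁻¹ := by
  rw [LinearMap.det_toLpLin, det_diagonal, Finset.prod_inv_distrib,
    Real.sqrt_prod _ fun i _ => hc i, abs_inv, abs_of_nonneg (by positivity)]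

theorem addHaar_preimage_setOf_sum_sq_div_le_one [MeasurableSpace F] [BorelSpace F]
    [FiniteDimensional ℝ F] (μ : Measure F) [μ.IsAddHaarMeasure]
    (hdim : finrank ℝ F + 1 = Fintype.card ι) (hc : ∀ i, 0 < c i) {ξ : EuclideanSpace ℝ ι}
    (hξ : ‖ξ‖ = 1) {t : ℝ} (ht : |t| ≤ √(∑ i, c i * ξ i ^ 2)) {φ : F →ᵃ[ℝ] EuclideanSpace ℝ ι}
    (hφ : Isometry φ) (hφt : ∀ y, ⟪ξ, φ y⟫ = t) :
    μ (φ ⁻¹' {x | ∑ i, x i ^ 2 / c i ≤ 1}) =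
      ENNReal.ofReal (√(∏ i, c i) * √(√(∑ i, c i * ξ i ^ 2) ^ 2 - t ^ 2) ^ finrank ℝ F /
        √(∑ i, c i * ξ i ^ 2) ^ (finrank ℝ F + 1)) * μ (closedBall 0 1) := by
  have hc' (i : ι) : 0 ≤ c i := (hc i).le
  have hdet := abs_det_toEuclideanLin_diagonal_inv_sqrt hc'
  have hA : LinearMap.det (toEuclideanLin (diagonal fun i => (√(c i))⁻¹)) ≠ 0 := by
    rw [← abs_pos, hdet]
    exact inv_pos.2 (Real.sqrt_pos.2 (Finset.prod_pos fun i _ => hc i))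
  have hη := norm_toEuclideanLin_diagonal_sqrt hc' ξ
  rw [setOf_sum_sq_div_le_one_eq hc', addHaar_preimage_ellipsoid_of_isometry μ
      (by simpa using hdim) hA hξ
      (inner_toEuclideanLin_diagonal_inv (fun i => (Real.sqrt_pos.2 (hc i)).ne') ξ)
      (ht.trans_eq hη.symm) hφ hφt, hdet, hη]
  field_simp

end Diagonal

theorem ellipsoid_section_volume_general
    (n : ℕ) (c : Fin n → ℝ) (hc : ∀ i, 0 < c i)
    (ξ : EuclideanSpace ℝ (Fin n)) (hξ : ‖ξ‖ = 1)
    (t : ℝ) (ht : |t| ≤ Real.sqrt (∑ i, c i * ξ i ^ 2))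
    (φ : EuclideanSpace ℝ (Fin (n - 1)) →ᵃ[ℝ] EuclideanSpace ℝ (Fin n))
    (hiso : Isometry φ)
    (hrange : Set.range φ = {x : EuclideanSpace ℝ (Fin n) | (inner ℝ ξ x : ℝ) = t}) :
    volume (φ ⁻¹' {x : EuclideanSpace ℝ (Fin n) | (∑ i, x i ^ 2 / c i) ≤ 1}) =
      volume (Metric.closedBall (0 : EuclideanSpace ℝ (Fin (n - 1))) 1) *
        ENNReal.ofReal (Real.sqrt (∏ i, c i) *
          (Real.sqrt (∑ i, c i * ξ i ^ 2) ^ 2 - t ^ 2) ^ (((n : ℝ) - 1) / 2) /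
            Real.sqrt (∑ i, c i * ξ i ^ 2) ^ n) ∧
    (Odd n → ∃ p : Polynomial ℝ, ∀ s : ℝ, |s| ≤ Real.sqrt (∑ i, c i * ξ i ^ 2) →
      (volume (Metric.closedBall (0 : EuclideanSpace ℝ (Fin (n - 1))) 1)).toReal *
        Real.sqrt (∏ i, c i) *
          (Real.sqrt (∑ i, c i * ξ i ^ 2) ^ 2 - s ^ 2) ^ (((n : ℝ) - 1) / 2) /
            Real.sqrt (∑ i, c i * ξ i ^ 2) ^ n = p.eval s) ∧
    (Even n → ∃ p : Polynomial ℝ, ∀ s : ℝ, |s| ≤ Real.sqrt (∑ i, c i * ξ i ^ 2) →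
      ((volume (Metric.closedBall (0 : EuclideanSpace ℝ (Fin (n - 1))) 1)).toReal *
        Real.sqrt (∏ i, c i) *
          (Real.sqrt (∑ i, c i * ξ i ^ 2) ^ 2 - s ^ 2) ^ (((n : ℝ) - 1) / 2) /
            Real.sqrt (∑ i, c i * ξ i ^ 2) ^ n) ^ 2 = p.eval s) := by
  have hn : 1 ≤ n := Nat.one_le_iff_ne_zero.2 fun h0 => by
    subst h0; simp [Subsingleton.elim ξ 0] at hξ
  set h := √(∑ i, c i * ξ i ^ 2)
  have hsq {s : ℝ} (hs : |s| ≤ h) : s ^ 2 ≤ h ^ 2 := sq_le_sq.2 (hs.trans (le_abs_self h))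
  set κ := (volume (closedBall (0 : EuclideanSpace ℝ (Fin (n - 1))) 1)).toReal * √(∏ i, c i) / h ^ n
  refine ⟨?_, ?_, ?_⟩
  · rw [addHaar_preimage_setOf_sum_sq_div_le_one volume (by simp; omega) hc hξ ht hiso
        fun y => hrange.subset (Set.mem_range_self y), finrank_euclideanSpace_fin,
      Nat.sub_add_cancel hn, Real.rpow_sub_one_div_two_eq_sqrt_pow (sub_nonneg.2 (hsq ht)) hn,
      mul_comm]
  · rintro ⟨j, rfl⟩
    obtain ⟨p, hp⟩ := exists_eval_eq_mul_sqrt_sub_sq_pow_two_mul κ (h ^ 2) j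
    refine ⟨p, fun s hs => ?_⟩
    rw [Real.rpow_sub_one_div_two_eq_sqrt_pow (sub_nonneg.2 (hsq hs)) hn, ← hp s (hsq hs),
      Nat.add_sub_cancel]
    ring
  · intro _
    obtain ⟨p, hp⟩ := exists_eval_eq_mul_sqrt_sub_sq_pow_two_mul (κ ^ 2) (h ^ 2) (n - 1)
    refine ⟨p, fun s hs => ?_⟩
    rw [Real.rpow_sub_one_div_two_eq_sqrt_pow (sub_nonneg.2 (hsq hs)) hn, ← hp s (hsq hs)]
    ring

/-- **Hyperplane sections of a solid ellipsoid.**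
For `n ≥ 2`, `c₁,…,c_n > 0`, `E = {Σ x_i²/c_i ≤ 1}`, a unit vector `ξ` and
`h(ξ) = √(Σ c_i ξ_i²)`, the `(n−1)`-dimensional volume of the section `E ∩ {⟨ξ,x⟩ = t}`
(for `|t| ≤ h(ξ)`) — measured by pulling back by any affine isometry `φ : ℝ^{n−1} → ℝⁿ`
with range the hyperplane `{⟨ξ,x⟩ = t}` — equals
`ω_{n−1}·√(c₁⋯c_n)·(h(ξ)² − t²)^{(n−1)/2}/h(ξ)ⁿ`.  In particular the `m`-th power of the
sectional volume function is a polynomial in `t` on the support, with `m = 1` for `n` odd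
and `m = 2` for `n` even. -/
theorem ellipsoid_section_volume
    (n : ℕ) (hn : 2 ≤ n) (c : Fin n → ℝ) (hc : ∀ i, 0 < c i)
    (ξ : EuclideanSpace ℝ (Fin n)) (hξ : ‖ξ‖ = 1)
    (t : ℝ) (ht : |t| ≤ Real.sqrt (∑ i, c i * ξ i ^ 2))
    (φ : EuclideanSpace ℝ (Fin (n - 1)) →ᵃ[ℝ] EuclideanSpace ℝ (Fin n))
    (hiso : Isometry φ)
    (hrange : Set.range φ = {x : EuclideanSpace ℝ (Fin n) | (inner ℝ ξ x : ℝ) = t}) :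
    volume (φ ⁻¹' {x : EuclideanSpace ℝ (Fin n) | (∑ i, x i ^ 2 / c i) ≤ 1}) =
      volume (Metric.closedBall (0 : EuclideanSpace ℝ (Fin (n - 1))) 1) *
        ENNReal.ofReal (Real.sqrt (∏ i, c i) *
          (Real.sqrt (∑ i, c i * ξ i ^ 2) ^ 2 - t ^ 2) ^ (((n : ℝ) - 1) / 2) /
            Real.sqrt (∑ i, c i * ξ i ^ 2) ^ n) ∧
    (Odd n → ∃ p : Polynomial ℝ, ∀ s : ℝ, |s| ≤ Real.sqrt (∑ i, c i * ξ i ^ 2) →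
      (volume (Metric.closedBall (0 : EuclideanSpace ℝ (Fin (n - 1))) 1)).toReal *
        Real.sqrt (∏ i, c i) *
          (Real.sqrt (∑ i, c i * ξ i ^ 2) ^ 2 - s ^ 2) ^ (((n : ℝ) - 1) / 2) /
            Real.sqrt (∑ i, c i * ξ i ^ 2) ^ n = p.eval s) ∧
    (Even n → ∃ p : Polynomial ℝ, ∀ s : ℝ, |s| ≤ Real.sqrt (∑ i, c i * ξ i ^ 2) →
      ((volume (Metric.closedBall (0 : EuclideanSpace ℝ (Fin (n - 1))) 1)).toReal *
        Real.sqrt (∏ i, c i) *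
          (Real.sqrt (∑ i, c i * ξ i ^ 2) ^ 2 - s ^ 2) ^ (((n : ℝ) - 1) / 2) /
            Real.sqrt (∑ i, c i * ξ i ^ 2) ^ n) ^ 2 = p.eval s) :=
  ellipsoid_section_volume_general n c hc ξ hξ t ht φ hiso hrange
end
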